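/- arXiv:math/0605412 — 7 statements merged into one kernel-verified Lean document; each statement's English description precedes it below -/
import Mathlib

section
/- Let δ be a submodular function with δ(∅)=0 on finite subsets of X. A subset Y ⊆ X is self-sufficient in X (written Y ≤ X) if δ(A/Y) ≥ 0 for all finite A ⊆ X, where δ(A/Y) := inf { δ(A/C) : A∩Y ⊆ C ⊆ Y, C finite }. Then Y is self-sufficient in X if and only if δ(A) ≥ δ(A∩Y) for all finite A ⊆ X. -/
open scoped Classical

/-- `Y` is self-sufficient in `X` (i.e. `δ(A/Y) ≥ 0` for every finite `A`,
where `δ(A/Y)` is the infimum of `δ(A/C)` over finite `C` with `A ∩ Y ⊆ C ⊆ Y`)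
iff `δ(A ∩ Y) ≤ δ A` for every finite `A`. -/
theorem selfSufficient_iff {X : Type*} [DecidableEq X] (δ : Finset X → ℤ)
    (h0 : δ ∅ = 0)
    (hsub : ∀ A B : Finset X, δ (A ∪ B) + δ (A ∩ B) ≤ δ A + δ B)
    (Y : Set X) :
    (∀ A C : Finset X, ↑C ⊆ Y → A.filter (· ∈ Y) ⊆ C → 0 ≤ δ (A ∪ C) - δ C) ↔
    (∀ A : Finset X, δ (A.filter (· ∈ Y)) ≤ δ A) := by
  constructor
  · intro h A
    have hC : ↑(A.filter (· ∈ Y)) ⊆ Y := by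
      intro x hx
      simp only [Finset.coe_filter, Set.mem_setOf_eq] at hx
      exact hx.2
    have := h A (A.filter (· ∈ Y)) hC (subset_refl _)
    have hAU : A ∪ A.filter (· ∈ Y) = A := Finset.union_eq_left.mpr (Finset.filter_subset _ _)
    rw [hAU] at this
    omega
  · intro h A C hCY hAC
    have key := h (A ∪ C)
    have hfilt : (A ∪ C).filter (· ∈ Y) = C := by
      apply Finset.Subset.antisymm
      · intro x hx
        simp only [Finset.mem_filter, Finset.mem_union] at hx
        rcases hx.1 with hxA | hxC
        · exact hAC (Finset.mem_filter.mpr ⟨hxA, hx.2⟩)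
        · exact hxC
      · intro x hx
        exact Finset.mem_filter.mpr ⟨Finset.mem_union_right _ hx, hCY hx⟩
    rw [hfilt] at key
    omega
end

section
/- If Y₁ and Y₂ are both self-sufficient in X with respect to a submodular function δ with δ(∅)=0, then Y₁ ∩ Y₂ is self-sufficient in X. -/
open scoped Classical

/-- the intersection of two self-sufficient subsets of `X` is self-sufficient. -/
theorem selfSufficient_inter_two {X : Type*} [DecidableEq X] (δ : Finset X → ℤ)
    (h0 : δ ∅ = 0)
    (hsub : ∀ A B : Finset X, δ (A ∪ B) + δ (A ∩ B) ≤ δ A + δ B)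
    (Y₁ Y₂ : Set X)
    (h1 : ∀ A : Finset X, δ (A.filter (· ∈ Y₁)) ≤ δ A)
    (h2 : ∀ A : Finset X, δ (A.filter (· ∈ Y₂)) ≤ δ A) :
    ∀ A : Finset X, δ (A.filter (· ∈ Y₁ ∩ Y₂)) ≤ δ A := by
  intro A
  have key : (A.filter (· ∈ Y₁)).filter (· ∈ Y₂) = A.filter (· ∈ Y₁ ∩ Y₂) := by
    rw [Finset.filter_filter]
    apply Finset.filter_congr
    intro x _
    simp [Set.mem_inter_iff]
  calc δ (A.filter (· ∈ Y₁ ∩ Y₂)) = δ ((A.filter (· ∈ Y₁)).filter (· ∈ Y₂)) := by rw [key]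
    _ ≤ δ (A.filter (· ∈ Y₁)) := h2 _
    _ ≤ δ A := h1 A
end

section
/- The intersection of an arbitrary (nonempty) family of self-sufficient subsets of X is self-sufficient; consequently every subset S ⊆ X is contained in a smallest self-sufficient subset cl_X(S) of X, namely the intersection of all self-sufficient subsets of X containing S (X itself being self-sufficient). -/
open scoped Classical

/-- `Y` is self-sufficient in `X` with respect to `δ`. -/
def SelfSuff {X : Type*} (δ : Finset X → ℤ) (Y : Set X) : Prop :=
  ∀ A : Finset X, δ (A.filter (· ∈ Y)) ≤ δ A

/-- The self-sufficient closure of `S` in `X`: the intersection of all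
self-sufficient subsets of `X` containing `S`. -/
def ssCl {X : Type*} (δ : Finset X → ℤ) (S : Set X) : Set X :=
  ⋂₀ {Y : Set X | S ⊆ Y ∧ SelfSuff δ Y}

lemma selfSuff_iInter {X : Type*} [DecidableEq X] (δ : Finset X → ℤ)
    {ι : Type*} [Nonempty ι] (Y : ι → Set X)
    (hY : ∀ i, SelfSuff δ (Y i)) : SelfSuff δ (⋂ i, Y i) := by
  intro A
  induction A using Finset.strongInduction with
  | _ A ih =>
    by_cases hall : ∀ a ∈ A, a ∈ ⋂ i, Y i
    · have : A.filter (· ∈ ⋂ i, Y i) = A := Finset.filter_true_of_mem hall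
      rw [this]
    · push_neg at hall
      obtain ⟨b, hbA, hb⟩ := hall
      rw [Set.mem_iInter] at hb
      push_neg at hb
      obtain ⟨i, hbi⟩ := hb
      set A' := A.filter (· ∈ Y i) with hA'
      have hsub' : A' ⊂ A := by
        refine Finset.ssubset_iff_of_subset (Finset.filter_subset _ _) |>.mpr ⟨b, hbA, ?_⟩
        simp [hA', hbi]
      have h1 : A.filter (· ∈ ⋂ i, Y i) = A'.filter (· ∈ ⋂ i, Y i) := by
        rw [hA', Finset.filter_filter]
        apply Finset.filter_congr
        intro x hx
        constructor
        · intro hxi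
          exact ⟨Set.mem_iInter.mp hxi i, hxi⟩
        · exact fun h => h.2
      calc δ (A.filter (· ∈ ⋂ i, Y i)) = δ (A'.filter (· ∈ ⋂ i, Y i)) := by rw [h1]
        _ ≤ δ A' := ih A' hsub'
        _ ≤ δ A := hY i A

/-- the intersection of a nonempty family of self-sufficient subsets is
self-sufficient; consequently every `S ⊆ X` is contained in a smallest self-sufficient
subset, namely the intersection of all self-sufficient subsets containing it. -/
theorem selfSufficient_sInter_and_closure {X : Type*} [DecidableEq X] (δ : Finset X → ℤ)
    (h0 : δ ∅ = 0)
    (hsub : ∀ A B : Finset X, δ (A ∪ B) + δ (A ∩ B) ≤ δ A + δ B) :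
    (∀ (ι : Type) [Nonempty ι] (Y : ι → Set X),
        (∀ i, SelfSuff δ (Y i)) → SelfSuff δ (⋂ i, Y i)) ∧
    (∀ S : Set X, S ⊆ ssCl δ S ∧ SelfSuff δ (ssCl δ S) ∧
        ∀ Y : Set X, S ⊆ Y → SelfSuff δ Y → ssCl δ S ⊆ Y) := by
  constructor
  · intro ι _ Y hY
    exact selfSuff_iInter δ Y hY
  · intro S
    have huniv : SelfSuff δ (Set.univ : Set X) := by
      intro A
      simp
    have hmem : (Set.univ : Set X) ∈ {Y : Set X | S ⊆ Y ∧ SelfSuff δ Y} :=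
      ⟨Set.subset_univ S, huniv⟩
    refine ⟨?_, ?_, ?_⟩
    · intro x hx
      exact Set.mem_sInter.mpr fun Y hY => hY.1 hx
    · have hne : Nonempty {Y : Set X // Y ∈ {Y : Set X | S ⊆ Y ∧ SelfSuff δ Y}} :=
        ⟨⟨Set.univ, hmem⟩⟩
      have : ssCl δ S = ⋂ Y : {Y : Set X // Y ∈ {Y : Set X | S ⊆ Y ∧ SelfSuff δ Y}}, (Y : Set X) := by
        rw [ssCl, Set.sInter_eq_iInter]
      rw [this]
      exact selfSuff_iInter δ _ fun Y => Y.2.2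
    · intro Y hSY hY
      exact Set.sInter_subset_of_mem ⟨hSY, hY⟩
end

section
/- Suppose δ is a nonnegative submodular function with δ(∅)=0 on finite subsets of X (i.e., δ(A) ≥ 0 for all finite A, equivalently ∅ ≤ X). Then the self-sufficient closure cl_X(S) of any finite set S ⊆ X is finite. -/
open scoped Classical

/-- if `δ` is nonnegative, then the self-sufficient closure of any
finite set is finite. -/
theorem ssCl_finite {X : Type*} [DecidableEq X] (δ : Finset X → ℤ)
    (h0 : δ ∅ = 0)
    (hsub : ∀ A B : Finset X, δ (A ∪ B) + δ (A ∩ B) ≤ δ A + δ B)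
    (hnn : ∀ A : Finset X, 0 ≤ δ A)
    (S : Finset X) :
    (ssCl δ (S : Set X)).Finite := by
  -- The set of values δ(B) for finite B ⊇ S, as naturals.
  set T : Set ℕ := {n | ∃ B : Finset X, S ⊆ B ∧ (δ B).toNat = n} with hT
  have hTne : T.Nonempty := ⟨(δ S).toNat, S, le_refl _, rfl⟩
  obtain ⟨B, hSB, hBval⟩ : ∃ B : Finset X, S ⊆ B ∧ (δ B).toNat = sInf T :=
    Nat.sInf_mem hTne
  -- minimality of δ B
  have hmin : ∀ B' : Finset X, S ⊆ B' → δ B ≤ δ B' := by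
    intro B' hB'
    have h1 : sInf T ≤ (δ B').toNat := Nat.sInf_le ⟨B', hB', rfl⟩
    rw [← hBval] at h1
    have hb := hnn B
    have hb' := hnn B'
    omega
  -- B is self-sufficient
  have hss : SelfSuff δ (↑B : Set X) := by
    intro A
    refine le_trans (le_of_eq (congrArg δ (?_ : _ = A ∩ B))) ?_
    · exact Finset.ext fun x => by simp [Finset.mem_inter]
    have h1 := hsub A B
    have h2 : δ B ≤ δ (A ∪ B) := hmin _ (hSB.trans Finset.subset_union_right)
    omega
  have hsub' : ssCl δ (S : Set X) ⊆ ↑B :=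
    Set.sInter_subset_of_mem ⟨fun x hx => hSB hx, hss⟩
  exact Set.Finite.subset B.finite_toSet hsub'
end

section
/- Let δ be submodular with δ(∅)=0 on finite subsets of X, and let Y ≤ Z be a minimal proper self-sufficient extension inside X, meaning Y ⊊ Z, Y ≤ Z, and no Y' with Y ⊊ Y' ⊊ Z is self-sufficient in Z. Then Z∖Y is finite. -/
open scoped Classical

/-- `Y` is self-sufficient in `Z` with respect to `δ`. -/
def SelfSuffIn {X : Type*} (δ : Finset X → ℤ) (Y Z : Set X) : Prop :=
  ∀ A : Finset X, ↑A ⊆ Z → δ (A.filter (· ∈ Y)) ≤ δ A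

/-- if `Y ≤ Z` is a minimal proper self-sufficient extension
(no intermediate `Y ⊊ Y' ⊊ Z` is self-sufficient in `Z`), then `Z \ Y` is finite. -/
theorem minimal_extension_finite {X : Type*} [DecidableEq X] (δ : Finset X → ℤ)
    (h0 : δ ∅ = 0)
    (hsub : ∀ A B : Finset X, δ (A ∪ B) + δ (A ∩ B) ≤ δ A + δ B)
    (Y Z : Set X) (hYZ : Y ⊂ Z)
    (hss : SelfSuffIn δ Y Z)
    (hmin : ∀ Y' : Set X, Y ⊂ Y' → Y' ⊂ Z → ¬ SelfSuffIn δ Y' Z) :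
    (Z \ Y).Finite := by
  classical
  by_contra hinf
  have hZY : (Z \ Y).Infinite := hinf
  have hYZ' : Y ⊆ Z := hYZ.subset
  -- Step 0: nonnegativity of relative values
  have key0 : ∀ S C : Finset X, ↑S ⊆ Z \ Y → ↑C ⊆ Y → δ C ≤ δ (S ∪ C) := by
    intro S C hS hC
    have hsubZ : ↑(S ∪ C) ⊆ Z := by
      intro x hx
      simp only [Finset.coe_union, Set.mem_union] at hx
      rcases hx with h | h
      · exact (hS h).1
      · exact hYZ' (hC h)
    have h1 := hss (S ∪ C) hsubZ
    have hfil : (S ∪ C).filter (· ∈ Y) = C := by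
      ext a
      simp only [Finset.mem_filter, Finset.mem_union]
      constructor
      · rintro ⟨h1 | h1, h2⟩
        · exact absurd h2 ((hS h1).2)
        · exact h1
      · intro h; exact ⟨Or.inr h, hC h⟩
    rwa [hfil] at h1
  -- a point of Z \ Y
  obtain ⟨z, hzZ, hzY⟩ := Set.exists_of_ssubset hYZ
  -- Step 1: minimize δ(S ∪ C) - δ C over nonempty finite S ⊆ Z\Y, finite C ⊆ Y
  set p : ℕ → Prop := fun n =>
    ∃ S C : Finset X, ↑S ⊆ Z \ Y ∧ S.Nonempty ∧ ↑C ⊆ Y ∧ δ (S ∪ C) - δ C = (n : ℤ) with hp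
  have hzZY : (↑({z} : Finset X) : Set X) ⊆ Z \ Y := by
    intro a ha
    simp only [Finset.coe_singleton, Set.mem_singleton_iff] at ha
    subst ha; exact ⟨hzZ, hzY⟩
  have hp0 : ∃ n, p n := by
    have h1 : (0:ℤ) ≤ δ {z} := by
      have := key0 {z} ∅ hzZY (by simp)
      simpa [h0] using this
    refine ⟨(δ {z}).toNat, {z}, ∅, hzZY, ⟨z, by simp⟩, by simp, ?_⟩
    simp [h0, Int.toNat_of_nonneg h1]
  set n₀ : ℕ := Nat.find hp0 with hn₀
  obtain ⟨S, C₁, hS, hSne, hC₁, hval⟩ := Nat.find_spec hp0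
  -- Step 2: lower bound
  have hlow : ∀ S' C' : Finset X, ↑S' ⊆ Z \ Y → S'.Nonempty → ↑C' ⊆ Y →
      (n₀ : ℤ) ≤ δ (S' ∪ C') - δ C' := by
    intro S' C' h1 h2 h3
    have hnn : (0:ℤ) ≤ δ (S' ∪ C') - δ C' := sub_nonneg.mpr (key0 S' C' h1 h3)
    have hpv : p (δ (S' ∪ C') - δ C').toNat :=
      ⟨S', C', h1, h2, h3, (Int.toNat_of_nonneg hnn).symm⟩
    have := Nat.find_min' hp0 hpv
    calc (n₀ : ℤ) ≤ ((δ (S' ∪ C') - δ C').toNat : ℤ) := by exact_mod_cast this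
      _ = δ (S' ∪ C') - δ C' := Int.toNat_of_nonneg hnn
  -- Step 3: absorption
  have habs : ∀ C : Finset X, ↑C ⊆ Y → δ (S ∪ (C ∪ C₁)) - δ (C ∪ C₁) ≤ (n₀ : ℤ) := by
    intro C hC
    have h1 : (S ∪ C₁) ∪ (C ∪ C₁) = S ∪ (C ∪ C₁) := by
      ext a
      simp only [Finset.mem_union]
      tauto
    have h2 : (S ∪ C₁) ∩ (C ∪ C₁) = C₁ := by
      ext a
      simp only [Finset.mem_inter, Finset.mem_union]
      constructor
      · rintro ⟨hA | hA, hB | hB⟩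
        · exact absurd (hC hB) ((hS hA).2)
        · exact hB
        · exact hA
        · exact hA
      · intro h; exact ⟨Or.inr h, Or.inr h⟩
    have h3 := hsub (S ∪ C₁) (C ∪ C₁)
    rw [h1, h2] at h3
    linarith [hval]
  -- Step 4: Y ∪ S is self-sufficient in Z
  have hmain : SelfSuffIn δ (Y ∪ (↑S : Set X)) Z := by
    intro A hA
    set C : Finset X := A.filter (· ∈ Y) with hCdef
    set T : Finset X := A.filter (· ∉ Y) with hTdef
    have hCY : (↑C : Set X) ⊆ Y := by
      intro a ha
      simp only [hCdef, Finset.coe_filter, Set.mem_setOf_eq] at ha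
      exact ha.2
    have hTZY : (↑T : Set X) ⊆ Z \ Y := by
      intro a ha
      simp only [hTdef, Finset.coe_filter, Set.mem_setOf_eq] at ha
      exact ⟨hA (Finset.mem_coe.mpr ha.1), ha.2⟩
    have hAeq : A = C ∪ T := by
      ext a
      simp only [hCdef, hTdef, Finset.mem_union, Finset.mem_filter]
      tauto
    set C' : Finset X := C ∪ C₁ with hC'def
    have hC'Y : (↑C' : Set X) ⊆ Y := by
      intro a ha
      simp only [hC'def, Finset.coe_union, Set.mem_union] at ha
      rcases ha with h | h
      · exact hCY h
      · exact hC₁ h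
    -- the filtered set
    have hfilter : ∀ (inst : DecidablePred (fun a => a ∈ Y ∪ (↑S : Set X))),
        @Finset.filter X (fun a => a ∈ Y ∪ (↑S : Set X)) inst A = C ∪ (T ∩ S) := by
      intro inst
      ext a
      simp only [hCdef, hTdef, Finset.mem_filter, Finset.mem_union, Finset.mem_inter,
        Set.mem_union, Finset.mem_coe]
      have hs : a ∈ S → ¬ a ∈ Y := fun h => (hS (Finset.mem_coe.mpr h)).2
      tauto
    -- union and intersection identities for submodularity
    have hUnion : (C ∪ T) ∪ (S ∪ C') = (S ∪ T) ∪ C' := by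
      ext a
      simp only [hC'def, Finset.mem_union]
      tauto
    have hInter : (C ∪ T) ∩ (S ∪ C') = C ∪ (T ∩ S) := by
      ext a
      simp only [hC'def, Finset.mem_inter, Finset.mem_union]
      have hc : a ∈ C → a ∈ Y := fun h => hCY (Finset.mem_coe.mpr h)
      have ht : a ∈ T → ¬ a ∈ Y := fun h => (hTZY (Finset.mem_coe.mpr h)).2
      have hc₁ : a ∈ C₁ → a ∈ Y := fun h => hC₁ (Finset.mem_coe.mpr h)
      have hs : a ∈ S → ¬ a ∈ Y := fun h => (hS (Finset.mem_coe.mpr h)).2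
      tauto
    have hsm := hsub (C ∪ T) (S ∪ C')
    rw [hUnion, hInter] at hsm
    have h5 : δ (S ∪ C') - δ C' ≤ (n₀ : ℤ) := habs C hCY
    have h6 : (n₀ : ℤ) ≤ δ ((S ∪ T) ∪ C') - δ C' := by
      have hST : (↑(S ∪ T) : Set X) ⊆ Z \ Y := by
        intro a ha
        simp only [Finset.coe_union, Set.mem_union] at ha
        rcases ha with h | h
        · exact hS h
        · exact hTZY h
      have hSTne : (S ∪ T).Nonempty := by
        obtain ⟨s, hs⟩ := hSne
        exact ⟨s, Finset.mem_union_left _ hs⟩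
      exact hlow (S ∪ T) C' hST hSTne hC'Y
    rw [hfilter _]
    calc δ (C ∪ T ∩ S) ≤ δ (C ∪ T) + δ (S ∪ C') - δ ((S ∪ T) ∪ C') := by linarith
      _ ≤ δ (C ∪ T) := by linarith
      _ = δ A := by rw [← hAeq]
  -- Step 5: contradiction with minimality
  obtain ⟨s0, hs0⟩ := hSne
  have hs0' : s0 ∈ Z \ Y := hS (Finset.mem_coe.mpr hs0)
  have hY1 : Y ⊂ Y ∪ (↑S : Set X) := by
    rw [Set.ssubset_iff_subset_ne]
    constructor
    · exact Set.subset_union_left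
    · intro heq
      have : s0 ∈ Y := heq ▸ (Set.mem_union_right Y (Finset.mem_coe.mpr hs0))
      exact hs0'.2 this
  have hY2 : Y ∪ (↑S : Set X) ⊂ Z := by
    obtain ⟨w, hw, hwS⟩ := hZY.exists_notMem_finset S
    rw [Set.ssubset_iff_subset_ne]
    constructor
    · rintro x (hx | hx)
      · exact hYZ' hx
      · exact (hS hx).1
    · intro heq
      have : w ∈ Y ∪ (↑S : Set X) := heq.symm ▸ hw.1
      rcases this with h | h
      · exact hw.2 h
      · exact hwS (Finset.mem_coe.mp h)
  exact hmin (Y ∪ (↑S : Set X)) hY1 hY2 hmain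
end

section
/- Transcendence degree is submodular on finite subsets of a field: for finite subsets A, B of a field K, trdeg(A∪B) + trdeg(A∩B) ≤ trdeg(A) + trdeg(B), where trdeg(S) denotes the transcendence degree over the prime field of the subfield generated by S. -/
/-!
The subsets of `K` that are algebraically independent over a subfield are the independent sets
of a matroid (`AlgebraicIndependent.matroid`). On finite sets, `ftrdeg` is the rank function of
this matroid for the prime field, and the rank function of a matroid is submodular.
-/

open scoped Classical

/-- The transcendence degree over the prime field of the subfield generated by a finite
subset `A` of a field `K`. -/
noncomputable def ftrdeg (K : Type*) [Field K] (A : Finset K) : ℕ :=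
  sSup {n | ∃ s ⊆ A, s.card = n ∧
    AlgebraicIndependent (⊥ : Subfield K) (fun x : {y : K // y ∈ s} => (x : K))}

theorem Matroid.eRk_coe_finset_eq_sSup_card_indep {α : Type*} (M : Matroid α) (A : Finset α) :
    M.eRk A = ↑(sSup {n | ∃ s ⊆ A, s.card = n ∧ M.Indep ↑s}) := by
  obtain ⟨I, hI⟩ := (M.isRkFinite_of_finite A.finite_toSet).exists_finset_isBasis'
  have hgreatest : IsGreatest {n | ∃ s ⊆ A, s.card = n ∧ M.Indep ↑s} I.card := by
    refine ⟨⟨I, Finset.coe_subset.1 hI.subset, rfl, hI.indep⟩, ?_⟩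
    rintro _ ⟨s, hsA, rfl, hs⟩
    rw [← ENat.natCast_le_natCast, ← Set.encard_coe_eq_coe_finsetCard,
      ← Set.encard_coe_eq_coe_finsetCard, hI.encard_eq_eRk]
    exact hs.encard_le_eRk_of_subset (Finset.coe_subset.2 hsA)
  rw [hgreatest.csSup_eq, ← hI.encard_eq_eRk, Set.encard_coe_eq_coe_finsetCard]

theorem ftrdeg_eq_eRk (K : Type*) [Field K] (A : Finset K) :
    (ftrdeg K A : ℕ∞) = (AlgebraicIndependent.matroid (⊥ : Subfield K) K).eRk A :=
  (Matroid.eRk_coe_finset_eq_sSup_card_indep (AlgebraicIndependent.matroid _ K) A).symm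

/-- transcendence degree is submodular on finite subsets of a field. -/
theorem ftrdeg_submodular (K : Type*) [Field K] (A B : Finset K) :
    ftrdeg K (A ∪ B) + ftrdeg K (A ∩ B) ≤ ftrdeg K A + ftrdeg K B := by
  have h := (AlgebraicIndependent.matroid (⊥ : Subfield K) K).eRk_inter_add_eRk_union_le A B
  rw [← Finset.coe_inter, ← Finset.coe_union] at h
  simp only [← ftrdeg_eq_eRk] at h
  rw [add_comm]
  exact_mod_cast h
end

section
/- With δ(A) = p·trdeg(A) − |A∩N| on finite subsets of an algebraically closed field K: if B ≤ A is a minimal self-sufficient extension of finite sets where every point of A∖B is black (lies in N), then 0 ≤ δ(A/B) ≤ p−1; moreover, writing A∖B = {a₁,…,aₙ}, for every nonempty proper subset S ⊊ {a₁,…,aₙ} one has p·trdeg(A / B∪S) < n − |S|. -/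
open scoped Classical

noncomputable def deltaF (K : Type*) [Field K] (p : ℕ) (N : Set K) (A : Finset K) : ℤ :=
  (p : ℤ) * ftrdeg K A - (A.filter (· ∈ N)).card

lemma ftrdeg_bdd (K : Type*) [Field K] (A : Finset K) :
    BddAbove {n | ∃ s ⊆ A, s.card = n ∧
      AlgebraicIndependent (⊥ : Subfield K) (fun x : {y : K // y ∈ s} => (x : K))} := by
  refine ⟨A.card, fun n hn => ?_⟩
  obtain ⟨s, hs, hcard, -⟩ := hn
  exact hcard ▸ Finset.card_le_card hs

lemma ftrdeg_zero_mem (K : Type*) [Field K] (A : Finset K) :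
    0 ∈ {n | ∃ s ⊆ A, s.card = n ∧
      AlgebraicIndependent (⊥ : Subfield K) (fun x : {y : K // y ∈ s} => (x : K))} := by
  refine ⟨∅, Finset.empty_subset _, Finset.card_empty, ?_⟩
  haveI : IsEmpty {y : K // y ∈ (∅ : Finset K)} := ⟨fun x => absurd x.2 (Finset.notMem_empty _)⟩
  exact algebraicIndependent_empty_type

lemma ftrdeg_mem_le (K : Type*) [Field K] (A s : Finset K) (hs : s ⊆ A)
    (hind : AlgebraicIndependent (⊥ : Subfield K) (fun x : {y : K // y ∈ s} => (x : K))) :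
    s.card ≤ ftrdeg K A :=
  le_csSup (ftrdeg_bdd K A) ⟨s, hs, rfl, hind⟩

lemma ftrdeg_insert_le (K : Type*) [Field K] (a : K) (B : Finset K) :
    ftrdeg K (insert a B) ≤ ftrdeg K B + 1 := by
  apply csSup_le ⟨0, ftrdeg_zero_mem K _⟩
  rintro n ⟨s, hs, rfl, hind⟩
  have hsub : s.erase a ⊆ B := by
    intro x hx
    have h1 := Finset.ne_of_mem_erase hx
    have h2 := hs (Finset.mem_of_mem_erase hx)
    rcases Finset.mem_insert.1 h2 with h | h
    · exact absurd h h1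
    · exact h
  have hind' : AlgebraicIndependent (⊥ : Subfield K)
      (fun x : {y : K // y ∈ s.erase a} => (x : K)) := by
    have := hind.comp (fun x : {y : K // y ∈ s.erase a} =>
        (⟨x.1, Finset.mem_of_mem_erase x.2⟩ : {y : K // y ∈ s}))
      (fun x y hxy => Subtype.ext (Subtype.mk_eq_mk.mp hxy))
    exact this
  have h1 : (s.erase a).card ≤ ftrdeg K B := ftrdeg_mem_le K B _ hsub hind'
  have h2 : s.card ≤ (s.erase a).card + 1 := by
    by_cases ha : a ∈ s
    · rw [Finset.card_erase_of_mem ha]; omega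
    · rw [Finset.erase_eq_of_notMem ha]; omega
  omega

lemma filter_card_split (K : Type*) [Field K] (N : Set K) (A A' : Finset K)
    (h1 : A' ⊆ A) (h2 : ∀ x ∈ A, x ∉ A' → x ∈ N) :
    (A.filter (· ∈ N)).card = (A'.filter (· ∈ N)).card + (A \ A').card := by
  have heq : A.filter (· ∈ N) = A'.filter (· ∈ N) ∪ (A \ A') := by
    ext x
    simp only [Finset.mem_filter, Finset.mem_union, Finset.mem_sdiff]
    constructor
    · rintro ⟨hxA, hxN⟩
      by_cases hx : x ∈ A'
      · exact Or.inl ⟨hx, hxN⟩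
      · exact Or.inr ⟨hxA, hx⟩
    · rintro (⟨hx, hxN⟩ | ⟨hxA, hx⟩)
      · exact ⟨h1 hx, hxN⟩
      · exact ⟨hxA, h2 x hxA hx⟩
  rw [heq, Finset.card_union_of_disjoint]
  exact Finset.disjoint_left.2 fun x hx hy =>
    (Finset.mem_sdiff.1 hy).2 (Finset.mem_of_mem_filter x hx)

/-- if `B ≤ A` is a minimal self-sufficient extension of finite sets in
which every new point is black, then `0 ≤ δ(A/B) ≤ p − 1`, and for every nonempty proper
subset `S` of `A ∖ B` one has `p·trdeg(A / B ∪ S) < |A ∖ B| − |S|`. -/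
theorem minimal_extension_black (K : Type*) [Field K] [IsAlgClosed K]
    (p : ℕ) (hp : 2 ≤ p) (N : Set K)
    (B A : Finset K) (hBA : B ⊂ A)
    (hss : ∀ C : Finset K, C ⊆ A → deltaF K p N (C ∩ B) ≤ deltaF K p N C)
    (hmin : ∀ Y' : Finset K, B ⊂ Y' → Y' ⊂ A →
      deltaF K p N A - deltaF K p N Y' < 0)
    (hblack : ∀ x ∈ A, x ∉ B → x ∈ N) :
    0 ≤ deltaF K p N A - deltaF K p N B ∧
    deltaF K p N A - deltaF K p N B ≤ (p : ℤ) - 1 ∧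
    ∀ S : Finset K, S ⊆ A \ B → S.Nonempty → S ≠ A \ B →
      (p : ℤ) * ((ftrdeg K A : ℤ) - (ftrdeg K (B ∪ S) : ℤ)) <
        ((A \ B).card : ℤ) - (S.card : ℤ) := by
  have hBsubA : B ⊆ A := hBA.subset
  -- part 1
  have part1 : 0 ≤ deltaF K p N A - deltaF K p N B := by
    have := hss A (subset_refl A)
    rw [Finset.inter_eq_right.2 hBsubA] at this
    omega
  refine ⟨part1, ?_, ?_⟩
  · -- part 2
    obtain ⟨a, haA, haB⟩ := Finset.exists_of_ssubset hBA
    have haN : a ∈ N := hblack a haA haB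
    -- δ(B ∪ {a}) - δ B ≤ p - 1
    have hY : insert a B ⊆ A := Finset.insert_subset haA hBsubA
    have hstep : deltaF K p N (insert a B) - deltaF K p N B ≤ (p : ℤ) - 1 := by
      have ht := ftrdeg_insert_le K a B
      have hf : ((insert a B).filter (· ∈ N)).card = (B.filter (· ∈ N)).card + 1 := by
        rw [Finset.filter_insert, if_pos haN, Finset.card_insert_of_notMem]
        simp [haB]
      simp only [deltaF, hf]
      push_cast
      nlinarith [ht, hp]
    by_cases hcase : insert a B = A
    · rw [← hcase]; exact hstep
    · have hY1 : B ⊂ insert a B := Finset.ssubset_insert haB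
      have hY2 : insert a B ⊂ A := ⟨hY, fun h => hcase (Finset.Subset.antisymm hY h)⟩
      have := hmin (insert a B) hY1 hY2
      omega
  · -- part 3
    intro S hS hSne hSne'
    set Y := B ∪ S with hYdef
    have hSA : S ⊆ A := hS.trans (Finset.sdiff_subset)
    have hYA : Y ⊆ A := Finset.union_subset hBsubA hSA
    have hBY : B ⊂ Y := by
      obtain ⟨s, hs⟩ := hSne
      refine ⟨Finset.subset_union_left, fun h => ?_⟩
      have := h (Finset.mem_union_right B hs)
      exact (Finset.mem_sdiff.1 (hS hs)).2 this
    have hYA' : Y ⊂ A := by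
      refine ⟨hYA, fun h => hSne' ?_⟩
      apply Finset.Subset.antisymm hS
      intro x hx
      obtain ⟨hxA, hxB⟩ := Finset.mem_sdiff.1 hx
      rcases Finset.mem_union.1 (h hxA) with h' | h'
      · exact absurd h' hxB
      · exact h'
    have hmin' := hmin Y hBY hYA'
    -- counting
    have hcount : (A.filter (· ∈ N)).card = (Y.filter (· ∈ N)).card + (A \ Y).card := by
      apply filter_card_split K N A Y hYA
      intro x hxA hxY
      exact hblack x hxA (fun h => hxY (Finset.mem_union_left S h))
    have hcard : (A \ Y).card = (A \ B).card - S.card ∧ S.card ≤ (A \ B).card := by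
      constructor
      · have : A \ Y = (A \ B) \ S := by
          rw [hYdef, Finset.sdiff_union_distrib]
          ext x
          simp only [Finset.mem_inter, Finset.mem_sdiff]
          constructor
          · rintro ⟨⟨h1, h2⟩, ⟨_, h3⟩⟩; exact ⟨⟨h1, h2⟩, h3⟩
          · rintro ⟨⟨h1, h2⟩, h3⟩; exact ⟨⟨h1, h2⟩, ⟨h1, h3⟩⟩
        rw [this, Finset.card_sdiff_of_subset hS]
      · exact Finset.card_le_card hS
    simp only [deltaF] at hmin'
    obtain ⟨hc1, hc2⟩ := hcard
    have : ((A \ Y).card : ℤ) = ((A \ B).card : ℤ) - S.card := by omega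
    rw [hcount] at hmin'
    push_cast at hmin' ⊢
    nlinarith [hmin', this]
end
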